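/- (Fisher consistency of the mixture estimator) Suppose the base estimating functional is Fisher consistent, i.e., θ = g(E_{F_θ}[η₁(x, θ)], ..., E_{F_θ}[η_h(x, θ)]) for all θ. Then for the true mixture H₀ with parameters (α₀, Θ₀), the pair (α₀, Θ₀) satisfies the mixture fixed point equations: α_{0k} = E_{H₀}[α̃_k(x, α₀, Θ₀)] and θ_{0k} = g(E_{H₀}[α̃_k(x,α₀,Θ₀) η₁(x, θ_{0k})]/α_{0k}, ..., E_{H₀}[α̃_k(x,α₀,Θ₀) η_h(x, θ_{0k})]/α_{0k}) for each k = 1,...,K. -/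

import Mathlib

open MeasureTheory

/-! Posterior weight times mixture density is the weighted component density, pointwise (where the
mixture density vanishes, so does every term, and Lean's `x / 0 = 0` gives `0 = 0`). Integrating,
`E_{H₀}[α̃_k φ] = α_{0k} E_{F_{θ_{0k}}}[φ]`: with `φ = 1` this is the weight equation, and with
`φ = η_j(·, θ_{0k})` the rescaled moments are those of `F_{θ_{0k}}`, so Fisher consistency of the
base functional returns `θ_{0k}`. -/

theorem Finset.div_sum_mul_sum_of_nonneg {ι 𝕜 : Type*} [Field 𝕜] [LinearOrder 𝕜]
    [IsStrictOrderedRing 𝕜] {s : Finset ι} {a : ι → 𝕜} (ha : ∀ i ∈ s, 0 ≤ a i) {k : ι}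
    (hk : k ∈ s) : a k / (∑ i ∈ s, a i) * ∑ i ∈ s, a i = a k :=
  div_mul_cancel_of_imp fun h => (Finset.sum_eq_zero_iff_of_nonneg ha).1 h k hk

section Mixture

variable {ι Θ X : Type*} [Fintype ι] {f : Θ → X → ℝ} {α : ι → ℝ}

theorem posterior_mul_mixture (hf : ∀ θ x, 0 ≤ f θ x) (hα : ∀ i, 0 ≤ α i) (θ : ι → Θ) (k : ι)
    (x : X) :
    α k * f (θ k) x / (∑ l, α l * f (θ l) x) * (∑ l, α l * f (θ l) x) = α k * f (θ k) x :=
  Finset.div_sum_mul_sum_of_nonneg (fun l _ => mul_nonneg (hα l) (hf _ x)) (Finset.mem_univ k)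

theorem integral_posterior_mul_mixture [MeasurableSpace X] (μ : Measure X)
    (hf : ∀ θ x, 0 ≤ f θ x) (hα : ∀ i, 0 ≤ α i) (θ : ι → Θ) (k : ι) (φ : X → ℝ) :
    ∫ x, α k * f (θ k) x / (∑ l, α l * f (θ l) x) * φ x * (∑ l, α l * f (θ l) x) ∂μ =
      α k * ∫ x, φ x * f (θ k) x ∂μ := by
  rw [← integral_const_mul]
  refine integral_congr_ae (Filter.Eventually.of_forall fun x => ?_)
  calc α k * f (θ k) x / (∑ l, α l * f (θ l) x) * φ x * (∑ l, α l * f (θ l) x)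
      = α k * f (θ k) x / (∑ l, α l * f (θ l) x) * (∑ l, α l * f (θ l) x) * φ x := by ring
    _ = α k * (φ x * f (θ k) x) := by rw [posterior_mul_mixture hf hα]; ring

end Mixture

theorem mixture_fisher_consistency_general {p q h K : ℕ}
    (f : (Fin q → ℝ) → (Fin p → ℝ) → ℝ)
    (hf_nonneg : ∀ θ x, 0 ≤ f θ x)
    (hf_one : ∀ θ, ∫ x, f θ x = 1)
    (g : (Fin h → ℝ) → (Fin q → ℝ))
    (η : Fin h → (Fin p → ℝ) → (Fin q → ℝ) → ℝ)
    (hFisher : ∀ θ : Fin q → ℝ, g (fun j => ∫ x, η j x θ * f θ x) = θ)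
    (α0 : Fin K → ℝ) (hα_pos : ∀ k, 0 < α0 k)
    (Θ0 : Fin K → (Fin q → ℝ)) (k : Fin K) :
    (∫ x, (α0 k * f (Θ0 k) x / (∑ l, α0 l * f (Θ0 l) x)) *
        (∑ l, α0 l * f (Θ0 l) x)) = α0 k ∧
    g (fun j =>
        (∫ x, (α0 k * f (Θ0 k) x / (∑ l, α0 l * f (Θ0 l) x)) * η j x (Θ0 k) *
          (∑ l, α0 l * f (Θ0 l) x)) / α0 k) = Θ0 k := by
  have hα : ∀ l, 0 ≤ α0 l := fun l => (hα_pos l).le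
  constructor
  · simpa [hf_one] using integral_posterior_mul_mixture volume hf_nonneg hα Θ0 k 1
  · simp_rw [integral_posterior_mul_mixture volume hf_nonneg hα Θ0 k,
      mul_div_cancel_left₀ _ (hα_pos k).ne']
    exact hFisher (Θ0 k)

/-- Fisher consistency of the mixture estimator: if the base functional is
Fisher consistent, i.e. `θ = g(E_{F_θ}[η₁(x,θ)], ..., E_{F_θ}[η_h(x,θ)])` for
all `θ`, then the true mixture parameters `(α₀, Θ₀)` satisfy the mixture fixed
point equations. -/
theorem mixture_fisher_consistency {p q h K : ℕ}
    (f : (Fin q → ℝ) → (Fin p → ℝ) → ℝ)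
    (hf_nonneg : ∀ θ x, 0 ≤ f θ x)
    (hf_int : ∀ θ, Integrable (f θ))
    (hf_one : ∀ θ, ∫ x, f θ x = 1)
    (g : (Fin h → ℝ) → (Fin q → ℝ))
    (η : Fin h → (Fin p → ℝ) → (Fin q → ℝ) → ℝ)
    (hη_int : ∀ (j : Fin h) (θ : Fin q → ℝ), Integrable (fun x => η j x θ * f θ x))
    (hFisher : ∀ θ : Fin q → ℝ, g (fun j => ∫ x, η j x θ * f θ x) = θ)
    (α0 : Fin K → ℝ) (hα_pos : ∀ k, 0 < α0 k) (hα_sum : ∑ k, α0 k = 1)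
    (Θ0 : Fin K → (Fin q → ℝ)) (k : Fin K) :
    (∫ x, (α0 k * f (Θ0 k) x / (∑ l, α0 l * f (Θ0 l) x)) *
        (∑ l, α0 l * f (Θ0 l) x)) = α0 k ∧
    g (fun j =>
        (∫ x, (α0 k * f (Θ0 k) x / (∑ l, α0 l * f (Θ0 l) x)) * η j x (Θ0 k) *
          (∑ l, α0 l * f (Θ0 l) x)) / α0 k) = Θ0 k :=
  mixture_fisher_consistency_general f hf_nonneg hf_one g η hFisher α0 hα_pos Θ0 k
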